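/- Let N be an oriented matroid of rank n on [2n] satisfying property (P). Then S = {B ⊆ [2n] : |B ∩ {i, n+i}| = 1 for every i ∈ {1,…,n}} is a subdivision of N. -/

import Mathlib

open Set

/-- A *sign vector* on an ambient type `α`. -/
abbrev SignVec (α : Type*) := α → SignType

namespace OMHK

variable {α : Type*}

/-- The support of a sign vector. -/
def supp (X : SignVec α) : Set α := {e | X e ≠ 0}

/-- A sign vector is nonnegative if every entry is `+` or `0`. -/
def Nonneg (X : SignVec α) : Prop := ∀ e, X e = 1 ∨ X e = 0

/-- Composition of sign vectors: `(X ∘ Y)ₑ = Xₑ` if `Xₑ ≠ 0`, else `Yₑ`. -/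
def compose (X Y : SignVec α) : SignVec α := fun e => if X e ≠ 0 then X e else Y e

/-- The separation set `S(X,Y) = {e : Xₑ = -Yₑ ≠ 0}`. -/
def sep (X Y : SignVec α) : Set α := {e | X e = -(Y e) ∧ X e ≠ 0}

/-- Two sign vectors are orthogonal if `S(X,Y)` and `S(X,-Y)` are both empty
or both nonempty. -/
def Orth (X Y : SignVec α) : Prop :=
  (sep X Y = ∅ ∧ sep X (-Y) = ∅) ∨ (sep X Y ≠ ∅ ∧ sep X (-Y) ≠ ∅)

/-- An oriented matroid with finite ground set inside the ambient type `α`,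
presented by its collection of covectors (sign vectors supported on the
ground set), satisfying the covector axioms. -/
structure OrientedMatroid (α : Type*) where
  ground : Set α
  ground_finite : ground.Finite
  covectors : Set (SignVec α)
  supp_subset : ∀ X ∈ covectors, supp X ⊆ ground
  zero_mem : (0 : SignVec α) ∈ covectors
  neg_mem : ∀ X ∈ covectors, -X ∈ covectors
  compose_mem : ∀ X ∈ covectors, ∀ Y ∈ covectors, compose X Y ∈ covectors
  elim : ∀ X ∈ covectors, ∀ Y ∈ covectors, ∀ e ∈ sep X Y,
    ∃ Z ∈ covectors, Z e = 0 ∧ ∀ e' ∉ sep X Y, Z e' = compose X Y e'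

namespace OrientedMatroid

variable (M : OrientedMatroid α)

/-- A cocircuit: a nonzero covector of minimal support. -/
def IsCocircuit (X : SignVec α) : Prop :=
  X ∈ M.covectors ∧ X ≠ 0 ∧
    ∀ Y ∈ M.covectors, Y ≠ 0 → supp Y ⊆ supp X → supp Y = supp X

/-- A vector: a sign vector supported on the ground set and orthogonal to
every covector. -/
def IsVector (X : SignVec α) : Prop :=
  supp X ⊆ M.ground ∧ ∀ Y ∈ M.covectors, Orth X Y

/-- A circuit: a nonzero vector of minimal support. -/
def IsCircuit (X : SignVec α) : Prop :=
  M.IsVector X ∧ X ≠ 0 ∧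
    ∀ Y, M.IsVector Y → Y ≠ 0 → supp Y ⊆ supp X → supp Y = supp X

/-- A set is independent if it is contained in the ground set and contains
the support of no circuit. -/
def Indep (A : Set α) : Prop :=
  A ⊆ M.ground ∧ ∀ X, M.IsCircuit X → ¬ supp X ⊆ A

/-- The rank of a subset: maximal cardinality of an independent subset of it. -/
noncomputable def rk (A : Set α) : ℕ :=
  sSup {k | ∃ I : Set α, I ⊆ A ∧ M.Indep I ∧ I.ncard = k}

/-- The rank of the oriented matroid. -/
noncomputable def rank : ℕ := M.rk M.ground

end OrientedMatroid

open scoped Classical in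
/-- Zero out the coordinates in `A` (the restriction to the complement of `A`,
in ambient terms). -/
noncomputable def restrictAway (A : Set α) (X : SignVec α) : SignVec α :=
  fun e => if e ∈ A then 0 else X e

/-- `M'` is the deletion `M ∖ A`: its ground set is `M.ground ∖ A` and its
circuits are the circuits of `M` vanishing on `A`. -/
def IsDeletion (M : OrientedMatroid α) (A : Set α) (M' : OrientedMatroid α) : Prop :=
  M'.ground = M.ground \ A ∧
  ∀ X, M'.IsCircuit X ↔ (M.IsCircuit X ∧ ∀ e ∈ A, X e = 0)

/-- `M'` is the contraction `M / A`: its ground set is `M.ground ∖ A` and its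
circuits are the nonzero minimal-support members of the restrictions away from
`A` of circuits of `M`. -/
def IsContraction (M : OrientedMatroid α) (A : Set α) (M' : OrientedMatroid α) : Prop :=
  M'.ground = M.ground \ A ∧
  ∀ X, M'.IsCircuit X ↔
    (X ≠ 0 ∧ (∃ Y, M.IsCircuit Y ∧ X = restrictAway A Y) ∧
      ∀ Z : SignVec α, Z ≠ 0 → (∃ Y, M.IsCircuit Y ∧ Z = restrictAway A Y) →
        supp Z ⊆ supp X → supp Z = supp X)

/-- `Nh` is an extension of `N` by the new element `h` (same rank). -/
def IsExtension (N : OrientedMatroid α) (h : α) (Nh : OrientedMatroid α) : Prop :=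
  h ∉ N.ground ∧ Nh.ground = insert h N.ground ∧ Nh.rank = N.rank ∧
    IsDeletion Nh {h} N

/-- The element `h` is in general position in `Nh`: every circuit whose support
contains `h` has support of cardinality `rank + 1`. -/
def GenPos (Nh : OrientedMatroid α) (h : α) : Prop :=
  ∀ X, Nh.IsCircuit X → X h ≠ 0 → (supp X).ncard = Nh.rank + 1

/-- A directed path from `a` to `b` in the digraph with arc relation `A`. -/
def IsDipath {V : Type*} (A : V → V → Prop) (p : List V) (a b : V) : Prop :=
  p ≠ [] ∧ p.head? = some a ∧ p.getLast? = some b ∧ p.Chain' A ∧ p.Nodup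

/-! ### Oriented matroid programs.
We fix the ambient type `ℕ`; the ground set of a program is `[n] ∪ {f, g}`
where `[n] = {0, …, n-1}`, the objective element is `f = n` and the right hand
side element is `g = n + 1`.  Extensions use the fresh element `h = n + 2`. -/

/-- `[n] = {0, …, n - 1}`. -/
def nset (n : ℕ) : Set ℕ := {k | k < n}

/-- `M` is an oriented matroid program of rank `r` on `[n] ∪ {f, g}`
(`f = n`, `g = n + 1`), where `Mf` denotes the deletion `M ∖ f`:
(i) every nonnegative cocircuit of `M ∖ f` has `g` in its support;
(ii) for every `e ∈ [n]` there is a nonnegative cocircuit `Y` of `M ∖ f`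
with `Y e = +`; (iii) every circuit of `M` whose support contains `f` has
support of cardinality `r + 1`. -/
def IsProgram (M Mf : OrientedMatroid ℕ) (n r : ℕ) : Prop :=
  M.ground = nset n ∪ {n, n + 1} ∧ M.rank = r ∧ IsDeletion M {n} Mf ∧
  (∀ Y, Mf.IsCocircuit Y → Nonneg Y → Y (n + 1) ≠ 0) ∧
  (∀ e, e < n → ∃ Y, Mf.IsCocircuit Y ∧ Nonneg Y ∧ Y e = 1) ∧
  (∀ X, M.IsCircuit X → X n ≠ 0 → (supp X).ncard = r + 1)

/-- A node of the program: `[n] ∖ supp Y` for `Y` a nonnegative cocircuit of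
`M ∖ f`. -/
def IsNode (Mf : OrientedMatroid ℕ) (n : ℕ) (v : Set ℕ) : Prop :=
  ∃ Y, Mf.IsCocircuit Y ∧ Nonneg Y ∧ v = nset n \ supp Y

/-- The arc relation of the digraph `K_f`: `v → v'` when `v, v'` are adjacent
nodes and the witnessing cocircuit `Y''` of `M` (zero at `g`, positive on
`v' ∖ v`, negative on `v ∖ v'`, zero on `v ∩ v'`, nonzero at `f`) satisfies
`Y'' f = Y'' e` for `e ∈ v ∖ v'`. -/
def Arc (M Mf : OrientedMatroid ℕ) (n r : ℕ) (v v' : Set ℕ) : Prop :=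
  IsNode Mf n v ∧ IsNode Mf n v' ∧ v ≠ v' ∧ M.rk (v ∩ v') = r - 2 ∧
  ∃ Y, M.IsCocircuit Y ∧ Y (n + 1) = 0 ∧
    (∀ e ∈ v' \ v, Y e = 1) ∧ (∀ e ∈ v \ v', Y e = -1) ∧
    (∀ e ∈ v ∩ v', Y e = 0) ∧ Y n ≠ 0 ∧ (∀ e ∈ v \ v', Y n = Y e)

/-- The source of `K_f`: the node with no incoming arcs. -/
def IsSource (M Mf : OrientedMatroid ℕ) (n r : ℕ) (v : Set ℕ) : Prop :=
  IsNode Mf n v ∧ ∀ u, ¬ Arc M Mf n r u v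

/-- The sink of `K_f`: the node with no outgoing arcs. -/
def IsSink (M Mf : OrientedMatroid ℕ) (n r : ℕ) (v : Set ℕ) : Prop :=
  IsNode Mf n v ∧ ∀ u, ¬ Arc M Mf n r v u

/-- The arc relation of the digraph `K_h` determined by an extension `M̂` of
`M/g` by `h = n + 2` in general position; `Mhf` denotes `M̂ ∖ f`. -/
def ArcH (M Mf Mhf : OrientedMatroid ℕ) (n r : ℕ) (v v' : Set ℕ) : Prop :=
  IsNode Mf n v ∧ IsNode Mf n v' ∧ v ≠ v' ∧ M.rk (v ∩ v') = r - 2 ∧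
  ∃ Y, Mhf.IsCocircuit Y ∧
    (∀ e ∈ v' \ v, Y e = 1) ∧ (∀ e ∈ v \ v', Y e = -1) ∧
    (∀ e ∈ v ∩ v', Y e = 0) ∧ Y (n + 2) ≠ 0 ∧ (∀ e ∈ v \ v', Y (n + 2) = Y e)

/-- `x` is a vertex of the subdigraph `K_{[f,-h]}`: there is a vector `X` of
`M̂` with `X₊ = x ∪ {h}` and `X₋ = {f}`. -/
def InKfmh (Mhat : OrientedMatroid ℕ) (n : ℕ) (x : Set ℕ) : Prop :=
  ∃ X, Mhat.IsVector X ∧ {e | X e = 1} = x ∪ {n + 2} ∧ {e | X e = -1} = {n}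

/-- `x` is a vertex of the subdigraph `K_{[-h,-f]}`: there is a vector `X` of
`M̂` with `X₊ = x ∪ {f, h}` and `X₋ = ∅`. -/
def InKmhmf (Mhat : OrientedMatroid ℕ) (n : ℕ) (x : Set ℕ) : Prop :=
  ∃ X, Mhat.IsVector X ∧ {e | X e = 1} = x ∪ {n, n + 2} ∧ {e | X e = -1} = (∅ : Set ℕ)

end OMHK
namespace OMHK

open OrientedMatroid

open scoped Classical in
/-- `N` has an adjoint: an oriented matroid `A` of the same rank together with
an injection `am` from the ground set of `A` into the cocircuits of `N` whose
image contains exactly one cocircuit of each opposite pair, such that for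
every `e` in the ground set of `N` the sign vector `b ↦ (am b) e` is a
cocircuit of `A`. -/
def HasAdjoint (N : OrientedMatroid ℕ) : Prop :=
  ∃ (β : Type) (A : OrientedMatroid β) (am : β → SignVec ℕ),
    A.rank = N.rank ∧
    (∀ b ∈ A.ground, N.IsCocircuit (am b)) ∧
    Set.InjOn am A.ground ∧
    (∀ Y, N.IsCocircuit Y →
      Xor' (∃ b ∈ A.ground, am b = Y) (∃ b ∈ A.ground, am b = -Y)) ∧
    (∀ e ∈ N.ground, A.IsCocircuit (fun b => if b ∈ A.ground then am b e else 0))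

/-- The generalized Levi intersection property for an oriented matroid `N` of
rank `s`: for every list of `s - 1` covectors `Y¹, …, Y^{s-1}` of `N` there is
an extension `N̂` of `N` by an element `h` and covectors `W¹, …, W^{s-1}` of
`N̂` with `Wⁱ h = 0` and `Wⁱ e = Yⁱ e` for all `e ≠ h`. -/
def GenLevi (N : OrientedMatroid ℕ) : Prop :=
  ∀ Y : Fin (N.rank - 1) → SignVec ℕ, (∀ i, Y i ∈ N.covectors) →
    ∃ h ∉ N.ground, ∃ Nh : OrientedMatroid ℕ, IsExtension N h Nh ∧
      ∃ W : Fin (N.rank - 1) → SignVec ℕ,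
        ∀ i, W i ∈ Nh.covectors ∧ W i h = 0 ∧ ∀ e, e ≠ h → W i e = Y i e

/-- `p ∈ conv_N(A)`: there is a circuit `X` of `N` with `X₊ ⊆ A` and
`X₋ = {p}`. -/
def MemConv (N : OrientedMatroid ℕ) (p : ℕ) (A : Set ℕ) : Prop :=
  ∃ X, N.IsCircuit X ∧ {e | X e = 1} ⊆ A ∧ {e | X e = -1} = {p}

/-- A face of `N`: the complement in the ground set of the support of a
nonnegative covector. -/
def IsFace (N : OrientedMatroid ℕ) (F : Set ℕ) : Prop :=
  ∃ Y ∈ N.covectors, Nonneg Y ∧ F = N.ground \ supp Y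

/-- A facet of `N`: a face of rank `rank N - 1`. -/
def IsFacet (N : OrientedMatroid ℕ) (F : Set ℕ) : Prop :=
  IsFace N F ∧ N.rk F = N.rank - 1

/-- `S` is a subdivision of the oriented matroid `N`. -/
def IsSubdivision (N : OrientedMatroid ℕ) (S : Set (Set ℕ)) : Prop :=
  (∀ σ ∈ S, σ ⊆ N.ground ∧ N.rk σ = N.rank) ∧
  (∀ f ∉ N.ground, ∀ Nf : OrientedMatroid ℕ, IsExtension N f Nf →
    ∀ σ1 ∈ S, ∀ σ2 ∈ S,
      MemConv Nf f σ1 → MemConv Nf f σ2 → MemConv Nf f (σ1 ∩ σ2)) ∧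
  (∀ σ1 ∈ S, ∀ σ2 ∈ S, ∀ N1 : OrientedMatroid ℕ,
    IsDeletion N (N.ground \ σ1) N1 → IsFace N1 (σ1 ∩ σ2)) ∧
  (∀ σ ∈ S, ∀ Nσ : OrientedMatroid ℕ, IsDeletion N (N.ground \ σ) Nσ →
    ∀ F, IsFacet Nσ F →
      (∃ G, IsFacet N G ∧ F ⊆ G) ∨ ({τ ∈ S | F ⊆ τ}.ncard = 2))

/-- The arc relation of the digraph `K_f` on the cells of a subdivision `S` of
`N`, induced by an extension `Nf` of `N` by `f` in general position. -/
def CellArc (N Nf : OrientedMatroid ℕ) (f : ℕ) (S : Set (Set ℕ))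
    (σ1 σ2 : Set ℕ) : Prop :=
  σ1 ∈ S ∧ σ2 ∈ S ∧ σ1 ≠ σ2 ∧ N.rk (σ1 ∩ σ2) = N.rank - 1 ∧
  ∃ Y, Nf.IsCocircuit Y ∧ (∀ e ∈ σ1 ∩ σ2, Y e = 0) ∧ Y f = 1 ∧
    ∀ e ∈ σ1 \ σ2, Y e = 1

/-- The source of the cell digraph: the cell `σ` admitting a vector `C` of
`N ∪ f` with `C f = -` and `C₊ = σ`. -/
def IsCellSource (Nf : OrientedMatroid ℕ) (f : ℕ) (S : Set (Set ℕ))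
    (σ : Set ℕ) : Prop :=
  σ ∈ S ∧ ∃ C, Nf.IsVector C ∧ C f = -1 ∧ {e | C e = 1} = σ

/-- The sink of the cell digraph: the cell `σ` admitting a vector `C` of
`N ∪ f` with `C f = +` and `C₊ = σ`. -/
def IsCellSink (Nf : OrientedMatroid ℕ) (f : ℕ) (S : Set (Set ℕ))
    (σ : Set ℕ) : Prop :=
  σ ∈ S ∧ ∃ C, Nf.IsVector C ∧ C f = 1 ∧ {e | C e = 1} = σ

/-- Property (P) for an oriented matroid of rank `n` on `[2n]`: every circuit
`Y` has `Y i = Y (n+i) ≠ 0` for some `i < n`. -/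
def PropertyP (N : OrientedMatroid ℕ) (n : ℕ) : Prop :=
  ∀ X, N.IsCircuit X → ∃ i, i < n ∧ X i = X (n + i) ∧ X i ≠ 0

/-- The cells of the cube subdivision: sets `B ⊆ [2n]` with
`|B ∩ {i, n+i}| = 1` for every `i < n`. -/
def cubeCells (n : ℕ) : Set (Set ℕ) :=
  {B | B ⊆ nset (2 * n) ∧
    ∀ i, i < n → ((i ∈ B ∧ n + i ∉ B) ∨ (i ∉ B ∧ n + i ∈ B))}

section AuxOMHK
variable {α : Type*}

lemma neg_apply (X : SignVec α) (e : α) : (-X) e = -(X e) := rfl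

lemma mem_supp {X : SignVec α} {e : α} : e ∈ supp X ↔ X e ≠ 0 := Iff.rfl

lemma mem_sep {X Y : SignVec α} {e : α} : e ∈ sep X Y ↔ X e = -(Y e) ∧ X e ≠ 0 := Iff.rfl

def Agr (X W : SignVec α) : Set α := {e | X e = W e ∧ X e ≠ 0}

lemma mem_agr {X Y : SignVec α} {e : α} : e ∈ Agr X Y ↔ X e = Y e ∧ X e ≠ 0 := Iff.rfl

lemma sep_neg_eq_agr (X W : SignVec α) : sep X (-W) = Agr X W := by
  ext e
  simp only [sep, Agr, Set.mem_setOf_eq, neg_apply, neg_neg]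

lemma orth_iff {X W : SignVec α} :
    Orth X W ↔ ((sep X W = ∅ ∧ Agr X W = ∅) ∨ (sep X W ≠ ∅ ∧ Agr X W ≠ ∅)) := by
  rw [Orth, sep_neg_eq_agr]

lemma sep_subset_supp (X W : SignVec α) : sep X W ⊆ supp X := fun e he => he.2

lemma agr_subset_supp (X W : SignVec α) : Agr X W ⊆ supp X := fun e he => he.2

lemma agr_neg_eq_sep (X W : SignVec α) : Agr X (-W) = sep X W := by
  ext e
  simp only [sep, Agr, Set.mem_setOf_eq, neg_apply]

lemma orth_neg_right {X W : SignVec α} (h : Orth X W) : Orth X (-W) := by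
  rw [orth_iff] at h ⊢
  rw [sep_neg_eq_agr, agr_neg_eq_sep]
  tauto

lemma sep_neg_left (X W : SignVec α) : sep (-X) W = Agr X W := by
  ext e
  simp only [sep, Agr, Set.mem_setOf_eq, neg_apply]
  generalize X e = s; generalize W e = t
  revert s t; decide

lemma agr_neg_left (X W : SignVec α) : Agr (-X) W = sep X W := by
  ext e
  simp only [sep, Agr, Set.mem_setOf_eq, neg_apply]
  generalize X e = s; generalize W e = t
  revert s t; decide

lemma orth_neg_left {X W : SignVec α} (h : Orth X W) : Orth (-X) W := by
  rw [orth_iff] at h ⊢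
  rw [sep_neg_left, agr_neg_left]
  tauto

lemma compose_apply (X Y : SignVec α) (e : α) :
    compose X Y e = if X e ≠ 0 then X e else Y e := rfl

lemma compose_apply_of_ne {X Y : SignVec α} {e : α} (h : X e ≠ 0) : compose X Y e = X e :=
  if_pos h

lemma compose_apply_of_eq {X Y : SignVec α} {e : α} (h : X e = 0) : compose X Y e = Y e := by
  simp [compose, h]

lemma compose_eq_zero {X Y : SignVec α} {e : α} (hX : X e = 0) (hY : Y e = 0) :
    compose X Y e = 0 := by simp [compose, hX, hY]

lemma supp_compose (X Y : SignVec α) : supp (compose X Y) ⊆ supp X ∪ supp Y := by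
  intro e he
  by_cases h : X e = 0
  · right; rw [mem_supp] at he ⊢; rwa [compose_apply_of_eq h] at he
  · left; exact h

/-- sign trichotomy helper -/
lemma sign_eq_of_ne_neg {s t : SignType} (hs : s ≠ 0) (ht : t ≠ 0) (h : s ≠ -t) : s = t := by
  revert h hs ht; revert s t; decide

lemma sign_eq_zero_of_ne_of_ne_neg {s t : SignType} (h1 : s ≠ t) (h2 : s ≠ -t) : s = 0 ∨ t = 0 := by
  revert h1 h2; revert s t; decide

lemma orth_compose {X Y W : SignVec α} (hX : Orth X W) (hY : Orth Y W) :
    Orth (compose X Y) W := by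
  rw [orth_iff] at hX hY ⊢
  rcases hX with ⟨hX1, hX2⟩ | ⟨hX1, hX2⟩
  · -- X disjoint from W
    rw [Set.eq_empty_iff_forall_notMem] at hX1 hX2
    have hdisj : ∀ e, X e ≠ 0 → W e = 0 := by
      intro e he
      by_contra hW
      rcases sign_eq_zero_of_ne_of_ne_neg (s := X e) (t := W e)
        (fun h => hX2 e ⟨h, he⟩) (fun h => hX1 e ⟨h, he⟩) with h | h
      · exact he h
      · exact hW h
    rcases hY with ⟨hY1, hY2⟩ | ⟨hY1, hY2⟩
    · -- Y disjoint too
      rw [Set.eq_empty_iff_forall_notMem] at hY1 hY2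
      left
      constructor <;> rw [Set.eq_empty_iff_forall_notMem] <;> intro e he
      · rcases he with ⟨h1, h2⟩
        by_cases hXe : X e = 0
        · rw [compose_apply_of_eq hXe] at h1 h2
          exact hY1 e ⟨h1, h2⟩
        · rw [compose_apply_of_ne hXe] at h1 h2
          exact hX1 e ⟨h1, h2⟩
      · rcases he with ⟨h1, h2⟩
        by_cases hXe : X e = 0
        · rw [compose_apply_of_eq hXe] at h1 h2
          exact hY2 e ⟨h1, h2⟩
        · rw [compose_apply_of_ne hXe] at h1 h2
          exact hX2 e ⟨h1, h2⟩
    · -- Y has both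
      right
      obtain ⟨d, hd1, hd2⟩ := Set.nonempty_iff_ne_empty.2 hY1
      obtain ⟨d', hd1', hd2'⟩ := Set.nonempty_iff_ne_empty.2 hY2
      have hWd : W d ≠ 0 := fun h => hd2 (by rw [hd1, h, neg_zero])
      have hWd' : W d' ≠ 0 := hd1' ▸ hd2'
      have hXd : X d = 0 := by by_contra h; exact hWd (hdisj d h)
      have hXd' : X d' = 0 := by by_contra h; exact hWd' (hdisj d' h)
      constructor <;> rw [← Set.nonempty_iff_ne_empty]
      · exact ⟨d, by rw [mem_sep, compose_apply_of_eq hXd]; exact ⟨hd1, hd2⟩⟩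
      · exact ⟨d', by rw [mem_agr, compose_apply_of_eq hXd']; exact ⟨hd1', hd2'⟩⟩
  · -- X has both
    right
    obtain ⟨d, hd1, hd2⟩ := Set.nonempty_iff_ne_empty.2 hX1
    obtain ⟨d', hd1', hd2'⟩ := Set.nonempty_iff_ne_empty.2 hX2
    constructor <;> rw [← Set.nonempty_iff_ne_empty]
    · exact ⟨d, by rw [mem_sep, compose_apply_of_ne hd2]; exact ⟨hd1, hd2⟩⟩
    · exact ⟨d', by rw [mem_agr, compose_apply_of_ne hd2']; exact ⟨hd1', hd2'⟩⟩

namespace OrientedMatroid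
variable {M : OrientedMatroid α}

lemma IsVector.supp_subset' {X : SignVec α} (h : M.IsVector X) : supp X ⊆ M.ground := h.1

lemma IsVector.orth {X : SignVec α} (h : M.IsVector X) : ∀ Y ∈ M.covectors, Orth X Y := h.2

lemma supp_neg (X : SignVec α) : supp (-X) = supp X := by
  ext e
  simp only [mem_supp, neg_apply]
  generalize X e = s; revert s; decide

lemma IsVector.neg {X : SignVec α} (h : M.IsVector X) : M.IsVector (-X) := by
  refine ⟨by rw [supp_neg]; exact h.1, fun Y hY => orth_neg_left (h.2 Y hY)⟩

lemma IsVector.compose {X Y : SignVec α} (hX : M.IsVector X) (hY : M.IsVector Y) :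
    M.IsVector (OMHK.compose X Y) := by
  refine ⟨fun e he => ?_, fun W hW => orth_compose (hX.2 W hW) (hY.2 W hW)⟩
  rcases supp_compose X Y he with h | h
  · exact hX.1 h
  · exact hY.1 h

end OrientedMatroid

open Classical in
lemma restrictAway_apply (A : Set α) (X : SignVec α) (e : α) :
    restrictAway A X e = if e ∈ A then 0 else X e := rfl

lemma restrictAway_of_mem {A : Set α} {X : SignVec α} {e : α} (h : e ∈ A) :
    restrictAway A X e = 0 := by rw [restrictAway_apply, if_pos h]

lemma restrictAway_of_not_mem {A : Set α} {X : SignVec α} {e : α} (h : e ∉ A) :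
    restrictAway A X e = X e := by rw [restrictAway_apply, if_neg h]

/-- Contraction of an oriented matroid by one element: keep covectors vanishing at `a`. -/
def OrientedMatroid.contractOne (M : OrientedMatroid α) (a : α) : OrientedMatroid α where
  ground := M.ground \ {a}
  ground_finite := M.ground_finite.subset diff_subset
  covectors := {Y ∈ M.covectors | Y a = 0}
  supp_subset := by
    rintro X ⟨hX, hXa⟩ e he
    refine ⟨M.supp_subset X hX he, ?_⟩
    simp only [Set.mem_singleton_iff]
    rintro rfl
    exact he hXa
  zero_mem := ⟨M.zero_mem, rfl⟩
  neg_mem := by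
    rintro X ⟨hX, hXa⟩
    exact ⟨M.neg_mem X hX, by rw [neg_apply, hXa, neg_zero]⟩
  compose_mem := by
    rintro X ⟨hX, hXa⟩ Y ⟨hY, hYa⟩
    exact ⟨M.compose_mem X hX Y hY, compose_eq_zero hXa hYa⟩
  elim := by
    rintro X ⟨hX, hXa⟩ Y ⟨hY, hYa⟩ e he
    obtain ⟨Z, hZ, hZe, hZ'⟩ := M.elim X hX Y hY e he
    have haZ : Z a = 0 := by
      have : a ∉ sep X Y := fun h => h.2 hXa
      rw [hZ' a this, compose_eq_zero hXa hYa]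
    exact ⟨Z, ⟨hZ, haZ⟩, hZe, hZ'⟩

lemma sep_restrictAway_singleton {X W : SignVec α} {a : α} (hW : W a = 0) :
    sep (restrictAway {a} X) W = sep X W := by
  ext e
  by_cases he : e = a
  · subst he
    simp only [mem_sep, restrictAway_of_mem (Set.mem_singleton _), hW, neg_zero]
    tauto
  · rw [mem_sep, mem_sep, restrictAway_of_not_mem (by simpa using he)]

lemma agr_restrictAway_singleton {X W : SignVec α} {a : α} (hW : W a = 0) :
    Agr (restrictAway {a} X) W = Agr X W := by
  ext e
  by_cases he : e = a
  · subst he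
    simp only [mem_agr, restrictAway_of_mem (Set.mem_singleton _), hW]
    tauto
  · rw [mem_agr, mem_agr, restrictAway_of_not_mem (by simpa using he)]

lemma isVector_contractOne {M : OrientedMatroid α} {a : α} {X : SignVec α}
    (hX : M.IsVector X) : (M.contractOne a).IsVector (restrictAway {a} X) := by
  constructor
  · intro e he
    rw [mem_supp] at he
    by_cases hea : e = a
    · subst hea; rw [restrictAway_of_mem (Set.mem_singleton e)] at he; exact absurd rfl he
    · rw [restrictAway_of_not_mem (by simpa using hea)] at he
      exact ⟨hX.1 he, by simpa using hea⟩
  · rintro Y ⟨hY, hYa⟩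
    have h := hX.2 Y hY
    rw [orth_iff] at h ⊢
    rw [sep_restrictAway_singleton hYa, agr_restrictAway_singleton hYa]
    exact h

lemma sign_eq_or_eq_neg {s t : SignType} (hs : s ≠ 0) (ht : t ≠ 0) : s = t ∨ s = -t := by
  revert hs ht; revert s t; decide

lemma sign_impossible {s t : SignType} (hs : s ≠ 0) (ht : t ≠ 0) (h1 : s ≠ t) (h2 : s ≠ -t) :
    False := by revert hs ht h1 h2; revert s t; decide

lemma neg_sign_ne_zero {t : SignType} (ht : t ≠ 0) : -t ≠ 0 := by
  revert ht; revert t; decide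

lemma exists_conformal_of_not_orth {X Y₀ : SignVec α} (h : ¬ Orth X Y₀) :
    ∃ W, (W = Y₀ ∨ W = -Y₀) ∧ (∀ e, X e ≠ 0 → X e ≠ -(W e)) ∧ ∃ e, X e = W e ∧ X e ≠ 0 := by
  rw [orth_iff] at h
  by_cases hs : sep X Y₀ = ∅
  · have hA : Agr X Y₀ ≠ ∅ := fun hA => h (Or.inl ⟨hs, hA⟩)
    obtain ⟨c, hc⟩ := Set.nonempty_iff_ne_empty.2 hA
    refine ⟨Y₀, Or.inl rfl, fun e he hne => ?_, c, hc.1, hc.2⟩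
    rw [Set.eq_empty_iff_forall_notMem] at hs
    exact hs e ⟨hne, he⟩
  · have hA : Agr X Y₀ = ∅ := by
      by_contra hA
      exact h (Or.inr ⟨hs, hA⟩)
    obtain ⟨c, hc⟩ := Set.nonempty_iff_ne_empty.2 hs
    refine ⟨-Y₀, Or.inr rfl, fun e he hne => ?_, c, hc.1, hc.2⟩
    rw [Set.eq_empty_iff_forall_notMem] at hA
    rw [neg_apply, neg_neg] at hne
    exact hA e ⟨hne, he⟩

section Update
variable [DecidableEq α]

lemma sep_update_zero_eq {X' Y : SignVec α} {a : α} (hX : X' a = 0) (hY : Y a = 0)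
    (s : SignType) : sep (Function.update X' a s) Y = sep X' Y := by
  ext e
  by_cases hea : e = a
  · subst hea
    simp only [mem_sep, Function.update_self, hX, hY, neg_zero]
    constructor
    · rintro ⟨h1, h2⟩; exact absurd h1 h2
    · rintro ⟨h1, h2⟩; exact absurd rfl h2
  · rw [mem_sep, mem_sep, Function.update_of_ne hea]

lemma agr_update_zero_eq {X' Y : SignVec α} {a : α} (hX : X' a = 0) (hY : Y a = 0)
    (s : SignType) : Agr (Function.update X' a s) Y = Agr X' Y := by
  ext e
  by_cases hea : e = a
  · subst hea
    simp only [mem_agr, Function.update_self, hX, hY]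
    constructor
    · rintro ⟨h1, h2⟩; exact absurd h1 h2
    · rintro ⟨h1, h2⟩; exact absurd rfl h2
  · rw [mem_agr, mem_agr, Function.update_of_ne hea]

lemma lift_lemma (M : OrientedMatroid α) (a : α) (haG : a ∈ M.ground) (X' : SignVec α)
    (hs : supp X' ⊆ M.ground) (ha : X' a = 0)
    (horth : ∀ Y ∈ M.covectors, Y a = 0 → Orth X' Y) :
    ∃ s, M.IsVector (Function.update X' a s) := by
  have hsupp : ∀ s : SignType, supp (Function.update X' a s) ⊆ M.ground := by
    intro s e he
    rw [mem_supp] at he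
    by_cases hea : e = a
    · subst hea; exact haG
    · rw [Function.update_of_ne hea] at he; exact hs he
  by_cases h0 : M.IsVector (Function.update X' a 0)
  · exact ⟨0, h0⟩
  have hXX : Function.update X' a 0 = X' := by rw [← ha, Function.update_eq_self]
  rw [hXX] at h0
  have hex : ¬ ∀ Y ∈ M.covectors, Orth X' Y := fun h => h0 ⟨hs, h⟩
  push_neg at hex
  obtain ⟨Y₀, hY₀, hno⟩ := hex
  obtain ⟨W, hWmem, hWno, c₀, hc₀, hc₀0⟩ := exists_conformal_of_not_orth hno
  have hWcov : W ∈ M.covectors := by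
    rcases hWmem with rfl | rfl
    · exact hY₀
    · exact M.neg_mem _ hY₀
  have ht : W a ≠ 0 := by
    intro h
    have horthW := horth W hWcov h
    rw [orth_iff] at horthW
    rcases horthW with ⟨h1, h2⟩ | ⟨h1, h2⟩
    · rw [Set.eq_empty_iff_forall_notMem] at h2; exact h2 c₀ ⟨hc₀, hc₀0⟩
    · obtain ⟨d, hd⟩ := Set.nonempty_iff_ne_empty.2 h1
      exact hWno d hd.2 hd.1
  set t := W a with hta
  refine ⟨-t, ?_⟩
  by_contra hbad
  have hex₁ : ¬ ∀ Y ∈ M.covectors, Orth (Function.update X' a (-t)) Y :=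
    fun h => hbad ⟨hsupp _, h⟩
  push_neg at hex₁
  obtain ⟨Y₁, hY₁, hno₁⟩ := hex₁
  set Xs := Function.update X' a (-t) with hXsdef
  have hXsa : Xs a = -t := Function.update_self _ _ _
  have hXse : ∀ e, e ≠ a → Xs e = X' e := fun e he => Function.update_of_ne he _ _
  have hY₁a : Y₁ a ≠ 0 := by
    intro h
    apply hno₁
    have h2 := horth Y₁ hY₁ h
    rw [orth_iff] at h2 ⊢
    rw [hXsdef, sep_update_zero_eq ha h, agr_update_zero_eq ha h]
    exact h2
  -- produce Y' with Y' a = -t never opposing X'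
  have key : ∃ Y', Y' ∈ M.covectors ∧ Y' a = -t ∧ ∀ e, X' e ≠ 0 → X' e ≠ -(Y' e) := by
    rcases sign_eq_or_eq_neg hY₁a ht with h | h
    · -- Y₁ a = t : a ∈ sep Xs Y₁, so Agr Xs Y₁ = ∅; take Y' = -Y₁
      have hmem : a ∈ sep Xs Y₁ := by
        rw [mem_sep, hXsa, h]
        exact ⟨rfl, neg_sign_ne_zero ht⟩
      have hAgr : Agr Xs Y₁ = ∅ := by
        by_contra hA
        exact hno₁ (orth_iff.mpr (Or.inr ⟨fun hs' => (hs' ▸ hmem : a ∈ (∅ : Set α)), hA⟩))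
      rw [Set.eq_empty_iff_forall_notMem] at hAgr
      refine ⟨-Y₁, M.neg_mem _ hY₁, by rw [neg_apply, h], fun e he hne => ?_⟩
      have hea : e ≠ a := fun hh => he (hh ▸ ha)
      rw [neg_apply, neg_neg] at hne
      exact hAgr e ⟨by rw [hXse e hea]; exact hne, by rw [hXse e hea]; exact he⟩
    · -- Y₁ a = -t : a ∈ Agr Xs Y₁, so sep Xs Y₁ = ∅; take Y' = Y₁
      have hmem : a ∈ Agr Xs Y₁ := by
        rw [mem_agr, hXsa, h]
        exact ⟨rfl, neg_sign_ne_zero ht⟩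
      have hSep : sep Xs Y₁ = ∅ := by
        by_contra hS
        exact hno₁ (orth_iff.mpr (Or.inr ⟨hS, fun hA => (hA ▸ hmem : a ∈ (∅ : Set α))⟩))
      rw [Set.eq_empty_iff_forall_notMem] at hSep
      refine ⟨Y₁, hY₁, h, fun e he hne => ?_⟩
      have hea : e ≠ a := fun hh => he (hh ▸ ha)
      exact hSep e ⟨by rw [hXse e hea]; exact hne, by rw [hXse e hea]; exact he⟩
  obtain ⟨Y', hY'cov, hY'a, hY'no⟩ := key
  have hsepa : a ∈ sep W Y' := by
    rw [mem_sep, hY'a, neg_neg]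
    exact ⟨hta, ht⟩
  obtain ⟨Z, hZcov, hZa, hZ⟩ := M.elim W hWcov Y' hY'cov a hsepa
  have hsepdisj : ∀ e, X' e ≠ 0 → e ∉ sep W Y' := by
    intro e he hmem
    rw [mem_sep] at hmem
    have h1 : X' e ≠ -(W e) := hWno e he
    have h2 : X' e ≠ W e := by
      rw [hmem.1]
      exact hY'no e he
    exact sign_impossible he hmem.2 h2 h1
  have horthZ := horth Z hZcov hZa
  rw [orth_iff] at horthZ
  have hagr : c₀ ∈ Agr X' Z := by
    have h1 : Z c₀ = compose W Y' c₀ := hZ c₀ (hsepdisj c₀ hc₀0)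
    have h2 : W c₀ ≠ 0 := hc₀ ▸ hc₀0
    rw [mem_agr, h1, compose_apply_of_ne h2]
    exact ⟨hc₀, hc₀0⟩
  have hsepe : sep X' Z = ∅ := by
    rw [Set.eq_empty_iff_forall_notMem]
    rintro e ⟨h1, h2⟩
    have h3 : Z e = compose W Y' e := hZ e (hsepdisj e h2)
    by_cases hWe : W e = 0
    · rw [h3, compose_apply_of_eq hWe] at h1
      exact hY'no e h2 h1
    · rw [h3, compose_apply_of_ne hWe] at h1
      exact hWno e h2 h1
  rcases horthZ with ⟨h1, h2⟩ | ⟨h1, h2⟩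
  · rw [Set.eq_empty_iff_forall_notMem] at h2; exact h2 c₀ hagr
  · exact h1 hsepe

end Update

lemma sign_neg_inj {s t : SignType} (h : -s = -t) : s = t := by
  revert h; revert s t; decide

lemma sign_eq_zero_of_self_eq_neg {s : SignType} (h : s = -s) : s = 0 := by
  revert h; revert s; decide

section VE
variable [DecidableEq α]

omit [DecidableEq α] in
lemma sep_restrictAway_pair (X Y : SignVec α) (a : α) :
    sep (restrictAway {a} X) (restrictAway {a} Y) = sep X Y \ {a} := by
  classical
  ext c
  by_cases hca : c = a
  · subst hca
    constructor
    · rintro ⟨h1, h2⟩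
      exact absurd (restrictAway_of_mem (Set.mem_singleton c)) h2
    · rintro ⟨h1, h2⟩
      exact absurd rfl h2
  · have hX : restrictAway {a} X c = X c := restrictAway_of_not_mem (by simpa using hca)
    have hY : restrictAway {a} Y c = Y c := restrictAway_of_not_mem (by simpa using hca)
    simp only [mem_sep, Set.mem_diff, Set.mem_singleton_iff, hX, hY, hca, not_false_iff, and_true]

omit [DecidableEq α] in
lemma compose_restrictAway_pair (X Y : SignVec α) (a : α) {c : α} (hca : c ≠ a) :
    compose (restrictAway {a} X) (restrictAway {a} Y) c = compose X Y c := by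
  have hX : restrictAway {a} X c = X c := restrictAway_of_not_mem (by simpa using hca)
  have hY : restrictAway {a} Y c = Y c := restrictAway_of_not_mem (by simpa using hca)
  simp only [compose_apply, hX, hY]

lemma sep_update_zero (V W : SignVec α) (e : α) :
    sep (Function.update V e 0) W = sep V W \ {e} := by
  ext c
  by_cases hce : c = e
  · subst hce
    constructor
    · rintro ⟨h1, h2⟩
      exact absurd (Function.update_self c 0 V) h2
    · rintro ⟨h1, h2⟩
      exact absurd rfl h2
  · simp only [mem_sep, Set.mem_diff, Set.mem_singleton_iff, Function.update_of_ne hce, hce,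
      not_false_iff, and_true]

lemma agr_update_zero (V W : SignVec α) (e : α) :
    Agr (Function.update V e 0) W = Agr V W \ {e} := by
  ext c
  by_cases hce : c = e
  · subst hce
    constructor
    · rintro ⟨h1, h2⟩
      exact absurd (Function.update_self c 0 V) h2
    · rintro ⟨h1, h2⟩
      exact absurd rfl h2
  · simp only [mem_agr, Set.mem_diff, Set.mem_singleton_iff, Function.update_of_ne hce, hce,
      not_false_iff, and_true]

omit [DecidableEq α] in
lemma ve_base_aux {X Y W : SignVec α} {e : α} (he : e ∈ sep X Y)
    (huniq : ∀ a ∈ sep X Y, a = e) (hYW : Orth Y W)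
    (h : sep (compose X Y) W = {e}) : False := by
  have hXe : X e ≠ 0 := he.2
  have heVW : e ∈ sep (compose X Y) W := h ▸ Set.mem_singleton e
  have hVe : compose X Y e = X e := compose_apply_of_ne hXe
  have hXW : X e = -(W e) := by rw [← hVe]; exact heVW.1
  have hWe : W e ≠ 0 := by
    intro h0
    rw [h0, neg_zero] at hXW
    exact hXe hXW
  have hYWe : Y e = W e := sign_neg_inj (by rw [← he.1, hXW])
  have hYe : Y e ≠ 0 := by rw [hYWe]; exact hWe
  rw [orth_iff] at hYW
  rcases hYW with ⟨h1', h2'⟩ | ⟨h1', h2'⟩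
  · rw [Set.eq_empty_iff_forall_notMem] at h2'
    exact h2' e ⟨hYWe, hYe⟩
  · obtain ⟨d, hd1, hd2⟩ := Set.nonempty_iff_ne_empty.2 h1'
    have hWd : W d ≠ 0 := by
      intro h0
      rw [h0, neg_zero] at hd1
      exact hd2 hd1
    have hde : d ≠ e := by
      rintro rfl
      rw [hYWe] at hd1
      exact hWd (sign_eq_zero_of_self_eq_neg hd1)
    have hdS : d ∉ sep X Y := fun hmem => hde (huniq d hmem)
    have hVd : compose X Y d = -(W d) := by
      by_cases hXd : X d = 0
      · rw [compose_apply_of_eq hXd]; exact hd1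
      · have hXYd : X d = Y d := sign_eq_of_ne_neg hXd hd2 (fun hc => hdS ⟨hc, hXd⟩)
        rw [compose_apply_of_ne hXd, hXYd]; exact hd1
    have hdmem : d ∈ sep (compose X Y) W := ⟨hVd, by rw [hVd]; exact neg_sign_ne_zero hWd⟩
    rw [h] at hdmem
    exact hde hdmem

omit [DecidableEq α] in
lemma eq_singleton_of_diff_empty {s : Set α} {e : α} (hne : s ≠ ∅) (h : s \ {e} = ∅) :
    s = {e} := by
  rw [Set.eq_empty_iff_forall_notMem] at h
  obtain ⟨d, hd⟩ := Set.nonempty_iff_ne_empty.2 hne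
  apply Set.eq_singleton_iff_unique_mem.2
  constructor
  · have : d = e := by
      by_contra hne'
      exact h d ⟨hd, hne'⟩
    exact this ▸ hd
  · intro c hc
    by_contra hne'
    exact h c ⟨hc, hne'⟩

theorem vec_elim_aux : ∀ (k : ℕ) (M : OrientedMatroid α), M.ground.ncard ≤ k →
    ∀ X Y, M.IsVector X → M.IsVector Y → ∀ e, e ∈ sep X Y →
    ∃ Z, M.IsVector Z ∧ Z e = 0 ∧ ∀ c, c ∉ sep X Y → Z c = compose X Y c := by
  intro k
  induction k with
  | zero =>
    intro M hM X Y hX hY e he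
    have hg : M.ground = ∅ := by
      rw [← Set.ncard_eq_zero M.ground_finite]
      omega
    exact absurd (hX.1 he.2) (by rw [hg]; exact Set.notMem_empty e)
  | succ k ih =>
    intro M hM X Y hX hY e he
    by_cases hs : ∃ a ∈ sep X Y, a ≠ e
    · obtain ⟨a, haS, hae⟩ := hs
      have haG : a ∈ M.ground := hX.1 (sep_subset_supp X Y haS)
      have hM' : (M.contractOne a).ground.ncard ≤ k := by
        have h2 : (M.ground \ {a}).ncard < M.ground.ncard :=
          Set.ncard_diff_singleton_lt_of_mem haG M.ground_finite
        have h3 : (M.contractOne a).ground = M.ground \ {a} := rfl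
        rw [h3]
        omega
      have hXv := isVector_contractOne (a := a) hX
      have hYv := isVector_contractOne (a := a) hY
      have he' : e ∈ sep (restrictAway {a} X) (restrictAway {a} Y) := by
        rw [sep_restrictAway_pair]
        exact ⟨he, by simpa using (Ne.symm hae)⟩
      obtain ⟨Z', hZ'v, hZ'e, hZ'c⟩ := ih (M.contractOne a) hM' _ _ hXv hYv e he'
      have h1 : supp Z' ⊆ M.ground := fun c hc => (hZ'v.1 hc).1
      have h2 : Z' a = 0 := by
        by_contra h
        exact (hZ'v.1 h).2 (Set.mem_singleton a)
      have h3 : ∀ W ∈ M.covectors, W a = 0 → Orth Z' W := fun W hW hWa => hZ'v.2 W ⟨hW, hWa⟩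
      obtain ⟨s, hZv⟩ := lift_lemma M a haG Z' h1 h2 h3
      refine ⟨Function.update Z' a s, hZv, ?_, ?_⟩
      · rw [Function.update_of_ne (Ne.symm hae)]
        exact hZ'e
      · intro c hc
        have hca : c ≠ a := fun h => hc (h ▸ haS)
        have hc' : c ∉ sep (restrictAway {a} X) (restrictAway {a} Y) := by
          rw [sep_restrictAway_pair]
          exact fun hmem => hc hmem.1
        rw [Function.update_of_ne hca, hZ'c c hc', compose_restrictAway_pair X Y a hca]
    · push_neg at hs
      have huniq : ∀ a ∈ sep X Y, a = e := hs
      have hseq : sep X Y = {e} := Set.eq_singleton_iff_unique_mem.2 ⟨he, huniq⟩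
      refine ⟨Function.update (compose X Y) e 0, ⟨?_, ?_⟩, Function.update_self _ _ _, ?_⟩
      · intro c hc
        rw [mem_supp] at hc
        have hce : c ≠ e := by
          rintro rfl
          rw [Function.update_self] at hc
          exact hc rfl
        rw [Function.update_of_ne hce] at hc
        rcases supp_compose X Y hc with h | h
        · exact hX.1 h
        · exact hY.1 h
      · intro W hW
        have hVW := orth_compose (hX.2 W hW) (hY.2 W hW)
        rw [orth_iff] at hVW ⊢
        rw [sep_update_zero, agr_update_zero]
        rcases hVW with ⟨hA, hB⟩ | ⟨hA, hB⟩
        · left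
          rw [hA, hB]
          exact ⟨Set.empty_diff _, Set.empty_diff _⟩
        · right
          constructor
          · intro hempty
            exact ve_base_aux he huniq (hY.2 W hW) (eq_singleton_of_diff_empty hA hempty)
          · intro hempty
            apply ve_base_aux he huniq (orth_neg_right (hY.2 W hW))
            rw [sep_neg_eq_agr]
            exact eq_singleton_of_diff_empty hB hempty
      · intro c hc
        rw [hseq] at hc
        exact Function.update_of_ne hc _ _

end VE

theorem exists_conformal_circuit [DecidableEq α] (M : OrientedMatroid α) (V : SignVec α)
    (hV : M.IsVector V) (hne : V ≠ 0) :
    ∃ C, M.IsCircuit C ∧ ∀ a, C a ≠ 0 → C a = V a := by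
  classical
  set K : Set ℕ :=
    {k | ∃ W, (M.IsVector W ∧ W ≠ 0 ∧ ∀ a, W a ≠ 0 → W a = V a) ∧ (supp W).ncard = k} with hK
  have hKne : K.Nonempty := ⟨(supp V).ncard, V, ⟨hV, hne, fun a _ => rfl⟩, rfl⟩
  obtain ⟨W, ⟨hWv, hWne, hWconf⟩, hWcard⟩ := Nat.sInf_mem hKne
  have hWfin : (supp W).Finite := M.ground_finite.subset hWv.1
  refine ⟨W, ⟨hWv, hWne, ?_⟩, hWconf⟩
  intro U hUv hUne hUsub
  by_contra hproper
  set K₂ : Set ℕ :=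
    {k | ∃ U', (M.IsVector U' ∧ U' ≠ 0 ∧ supp U' ⊆ supp W ∧ supp U' ≠ supp W) ∧
      (sep U' W).ncard = k} with hK₂
  have hK₂ne : K₂.Nonempty := ⟨(sep U W).ncard, U, ⟨hUv, hUne, hUsub, hproper⟩, rfl⟩
  obtain ⟨U₀, ⟨hU₀v, hU₀ne, hU₀sub, hU₀proper⟩, hU₀card⟩ := Nat.sInf_mem hK₂ne
  by_cases hsepU : sep U₀ W = ∅
  · -- U₀ is conformal to W, hence to V : contradicts minimality of W
    rw [Set.eq_empty_iff_forall_notMem] at hsepU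
    have hconf : ∀ a, U₀ a ≠ 0 → U₀ a = W a := by
      intro a ha
      have hWa : W a ≠ 0 := hU₀sub ha
      exact sign_eq_of_ne_neg ha hWa (fun h => hsepU a ⟨h, ha⟩)
    have hconfV : ∀ a, U₀ a ≠ 0 → U₀ a = V a := by
      intro a ha
      rw [hconf a ha]
      exact hWconf a (hconf a ha ▸ ha)
    have hmem : (supp U₀).ncard ∈ K := ⟨U₀, ⟨hU₀v, hU₀ne, hconfV⟩, rfl⟩
    have hlt : (supp U₀).ncard < (supp W).ncard :=
      Set.ncard_lt_ncard (HasSubset.Subset.ssubset_of_ne hU₀sub hU₀proper) hWfin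
    have := Nat.sInf_le hmem
    omega
  · obtain ⟨a, ha⟩ := Set.nonempty_iff_ne_empty.2 hsepU
    have hWa : W a ≠ 0 := by
      have h1 := ha.1
      have h2 := ha.2
      intro h0
      rw [h0, neg_zero] at h1
      exact h2 h1
    obtain ⟨Z, hZv, hZa, hZc⟩ :=
      vec_elim_aux M.ground.ncard M le_rfl U₀ W hU₀v hWv a ha
    have hZsupp : supp Z ⊆ supp W := by
      intro c hc
      by_contra hcW
      have hWc : W c = 0 := not_not.1 hcW
      have hUc : U₀ c = 0 := by
        by_contra h
        exact hcW (hU₀sub h)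
      have hcsep : c ∉ sep U₀ W := fun hmem => hmem.2 hUc
      rw [mem_supp, hZc c hcsep, compose_eq_zero hUc hWc] at hc
      exact hc rfl
    have hZproper : supp Z ≠ supp W := by
      intro h
      have : a ∈ supp Z := h.symm ▸ (hWa : a ∈ supp W)
      exact this hZa
    have hZne : Z ≠ 0 := by
      have hnsub : ¬ supp W ⊆ sep U₀ W := by
        intro hsub
        exact hU₀proper (subset_antisymm hU₀sub (hsub.trans (sep_subset_supp _ _)))
      obtain ⟨b, hbW, hbS⟩ := Set.not_subset.1 hnsub
      have hZb : Z b ≠ 0 := by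
        rw [hZc b hbS]
        by_cases hUb : U₀ b = 0
        · rw [compose_apply_of_eq hUb]; exact hbW
        · rw [compose_apply_of_ne hUb]; exact hUb
      intro h0
      rw [h0] at hZb
      exact hZb rfl
    have hsepZsub : sep Z W ⊆ sep U₀ W := by
      intro c hc
      by_contra hcs
      have hZcc : Z c = compose U₀ W c := hZc c hcs
      have hc1 := hc.1
      have hc2 := hc.2
      by_cases hUc : U₀ c = 0
      · rw [compose_apply_of_eq hUc] at hZcc
        have hWc : W c = 0 := sign_eq_zero_of_self_eq_neg (hZcc.symm.trans hc1)
        rw [hZcc, hWc] at hc2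
        exact hc2 rfl
      · rw [compose_apply_of_ne hUc] at hZcc
        exact hcs ⟨hZcc.symm.trans hc1, hUc⟩
    have hass : a ∉ sep Z W := fun hmem => hmem.2 hZa
    have hstrict : sep Z W ⊂ sep U₀ W :=
      HasSubset.Subset.ssubset_of_ne hsepZsub (fun h => hass (h.symm ▸ ha))
    have hfin : (sep U₀ W).Finite :=
      M.ground_finite.subset ((sep_subset_supp _ _).trans hU₀v.1)
    have hlt : (sep Z W).ncard < (sep U₀ W).ncard := Set.ncard_lt_ncard hstrict hfin
    have hmem : (sep Z W).ncard ∈ K₂ := ⟨Z, ⟨hZv, hZne, hZsupp, hZproper⟩, rfl⟩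
    have := Nat.sInf_le hmem
    omega

lemma restrictAway_zero (A : Set α) : restrictAway A (0 : SignVec α) = 0 := by
  funext e
  rw [restrictAway_apply]
  split <;> rfl

lemma restrictAway_neg (A : Set α) (Y : SignVec α) :
    restrictAway A (-Y) = -(restrictAway A Y) := by
  funext e
  rw [neg_apply, restrictAway_apply, restrictAway_apply]
  split
  · rw [neg_zero]
  · rfl

lemma restrictAway_compose (A : Set α) (X Y : SignVec α) :
    restrictAway A (compose X Y) = compose (restrictAway A X) (restrictAway A Y) := by
  funext e
  by_cases he : e ∈ A
  · rw [restrictAway_of_mem he, compose_apply, restrictAway_of_mem he, restrictAway_of_mem he]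
    simp
  · rw [restrictAway_of_not_mem he, compose_apply, compose_apply,
      restrictAway_of_not_mem he, restrictAway_of_not_mem he]

/-- Deletion of one element: covectors are restrictions. -/
def OrientedMatroid.deleteOne (M : OrientedMatroid α) (b : α) : OrientedMatroid α where
  ground := M.ground \ {b}
  ground_finite := M.ground_finite.subset diff_subset
  covectors := (restrictAway {b}) '' M.covectors
  supp_subset := by
    rintro _ ⟨Y, hY, rfl⟩ e he
    rw [mem_supp] at he
    by_cases heb : e = b
    · subst heb
      rw [restrictAway_of_mem (Set.mem_singleton _)] at he
      exact absurd rfl he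
    · rw [restrictAway_of_not_mem (by simpa using heb)] at he
      exact ⟨M.supp_subset Y hY he, by simpa using heb⟩
  zero_mem := ⟨0, M.zero_mem, restrictAway_zero _⟩
  neg_mem := by
    rintro _ ⟨Y, hY, rfl⟩
    exact ⟨-Y, M.neg_mem Y hY, restrictAway_neg _ _⟩
  compose_mem := by
    rintro _ ⟨X, hX, rfl⟩ _ ⟨Y, hY, rfl⟩
    exact ⟨compose X Y, M.compose_mem X hX Y hY, restrictAway_compose _ _ _⟩
  elim := by
    rintro _ ⟨X, hX, rfl⟩ _ ⟨Y, hY, rfl⟩ e he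
    rw [sep_restrictAway_pair] at he
    obtain ⟨Z, hZ, hZe, hZc⟩ := M.elim X hX Y hY e he.1
    have heb : e ≠ b := by simpa using he.2
    refine ⟨restrictAway {b} Z, ⟨Z, hZ, rfl⟩, ?_, ?_⟩
    · rw [restrictAway_of_not_mem (by simpa using heb)]
      exact hZe
    · intro c hc
      by_cases hcb : c = b
      · subst hcb
        rw [restrictAway_of_mem (Set.mem_singleton _), compose_apply,
          restrictAway_of_mem (Set.mem_singleton _), restrictAway_of_mem (Set.mem_singleton _)]
        simp
      · have hc' : c ∉ sep X Y := by
          intro hmem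
          exact hc (by rw [sep_restrictAway_pair]; exact ⟨hmem, by simpa using hcb⟩)
        rw [restrictAway_of_not_mem (by simpa using hcb), hZc c hc',
          compose_restrictAway_pair X Y b hcb]

lemma sep_restrictAway_right {X Y : SignVec α} {b : α} (hX : X b = 0) :
    sep X (restrictAway {b} Y) = sep X Y := by
  ext c
  by_cases hcb : c = b
  · subst hcb
    constructor
    · rintro ⟨h1, h2⟩; exact absurd hX h2
    · rintro ⟨h1, h2⟩; exact absurd hX h2
  · rw [mem_sep, mem_sep, restrictAway_of_not_mem (by simpa using hcb)]

lemma agr_restrictAway_right {X Y : SignVec α} {b : α} (hX : X b = 0) :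
    Agr X (restrictAway {b} Y) = Agr X Y := by
  ext c
  by_cases hcb : c = b
  · subst hcb
    constructor
    · rintro ⟨h1, h2⟩; exact absurd hX h2
    · rintro ⟨h1, h2⟩; exact absurd hX h2
  · rw [mem_agr, mem_agr, restrictAway_of_not_mem (by simpa using hcb)]

lemma isVector_of_deleteOne {M : OrientedMatroid α} {b : α} {X : SignVec α}
    (h : (M.deleteOne b).IsVector X) : M.IsVector X := by
  have hXb : X b = 0 := by
    by_contra h0
    exact (h.1 h0).2 (Set.mem_singleton b)
  constructor
  · exact h.1.trans diff_subset
  · intro Y hY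
    have := h.2 (restrictAway {b} Y) ⟨Y, hY, rfl⟩
    rw [orth_iff] at this ⊢
    rw [sep_restrictAway_right hXb, agr_restrictAway_right hXb] at this
    exact this

lemma exists_cov_value {M : OrientedMatroid α} {b : α} {V : SignVec α}
    (hV : V ∈ M.covectors) (hVb : V b ≠ 0) {s : SignType} (hs : s ≠ 0) :
    ∃ V' ∈ M.covectors, V' b = s := by
  rcases sign_eq_or_eq_neg hVb hs with h | h
  · exact ⟨V, hV, h⟩
  · refine ⟨-V, M.neg_mem V hV, ?_⟩
    rw [neg_apply, h, neg_neg]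

lemma compose_fix {M : OrientedMatroid α} {X : SignVec α} (hfull : supp X = M.ground)
    {b : α} {Z V' : SignVec α} (hZcov : Z ∈ M.covectors) (hZb : Z b = 0)
    (hZe : ∀ e, e ≠ b → Z e = X e) (hVcov : V' ∈ M.covectors) (hVb : V' b = X b) :
    X ∈ M.covectors := by
  have hXeq : X = compose Z V' := by
    funext e
    by_cases heb : e = b
    · subst heb
      rw [compose_apply_of_eq hZb, hVb]
    · by_cases heG : e ∈ M.ground
      · have hXe : X e ≠ 0 := by rw [← hfull] at heG; exact heG
        have : Z e = X e := hZe e heb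
        rw [compose_apply_of_ne (this ▸ hXe), this]
      · have hXe : X e = 0 := by
          by_contra h0
          exact heG (hfull ▸ (h0 : e ∈ supp X))
        have hZe' : Z e = 0 := (hZe e heb).trans hXe
        have hVe : V' e = 0 := by
          by_contra h0
          exact heG (M.supp_subset V' hVcov h0)
        rw [compose_apply_of_eq hZe', hVe, hXe]
  rw [hXeq]
  exact M.compose_mem Z hZcov V' hVcov

lemma exists_cov_ne_zero {M : OrientedMatroid α} (hnovec : ∀ V, M.IsVector V → V = 0)
    {e : α} (heG : e ∈ M.ground) : ∃ V ∈ M.covectors, V e ≠ 0 := by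
  classical
  by_contra h
  push_neg at h
  set δ : SignVec α := Function.update (0 : SignVec α) e 1 with hδ
  have hδe : δ e = 1 := Function.update_self _ _ _
  have hδ' : ∀ c, c ≠ e → δ c = 0 := fun c hc => Function.update_of_ne hc _ _
  have hvec : M.IsVector δ := by
    constructor
    · intro c hc
      rw [mem_supp] at hc
      by_cases hce : c = e
      · subst hce; exact heG
      · exact absurd (hδ' c hce) hc
    · intro Y hY
      left
      constructor <;> rw [Set.eq_empty_iff_forall_notMem] <;> rintro c ⟨h1, h2⟩
      · by_cases hce : c = e
        · subst hce
          rw [h Y hY, neg_zero] at h1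
          exact h2 h1
        · exact h2 (hδ' c hce)
      · by_cases hce : c = e
        · subst hce
          rw [neg_apply, neg_neg, h Y hY] at h1
          exact h2 h1
        · exact h2 (hδ' c hce)
  have := hnovec δ hvec
  rw [hδ] at this
  have : (1 : SignType) = 0 := by
    calc (1 : SignType) = Function.update (0 : SignVec α) e 1 e := hδe.symm
    _ = 0 := by rw [this]; rfl
  exact absurd this (by decide)

theorem full_support_covector_aux :
    ∀ (k : ℕ) (M : OrientedMatroid α), M.ground.ncard ≤ k →
    (∀ V, M.IsVector V → V = 0) → ∀ X : SignVec α, supp X = M.ground → X ∈ M.covectors := by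
  intro k
  induction k with
  | zero =>
    intro M hM hnovec X hX
    have hg : M.ground = ∅ := by
      rw [← Set.ncard_eq_zero M.ground_finite]
      omega
    have : X = 0 := by
      funext e
      by_contra h0
      have he : e ∈ supp X := h0
      rw [hX, hg] at he
      exact absurd he (Set.notMem_empty e)
    rw [this]
    exact M.zero_mem
  | succ k ih =>
    intro M hM hnovec X hX
    by_cases hg : M.ground = ∅
    · have : X = 0 := by
        funext e
        by_contra h0
        have he : e ∈ supp X := h0
        rw [hX, hg] at he
        exact absurd he (Set.notMem_empty e)
      rw [this]
      exact M.zero_mem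
    · -- ground nonempty
      have hXne : X ≠ 0 := by
        obtain ⟨e₀, he₀⟩ := Set.nonempty_iff_ne_empty.2 hg
        intro h0
        have hmem : e₀ ∈ supp X := by rw [hX]; exact he₀
        rw [h0] at hmem
        exact hmem rfl
      have hXnotvec : ¬ M.IsVector X := fun h => hXne (hnovec X h)
      have hex : ∃ Y₀ ∈ M.covectors, ¬ Orth X Y₀ := by
        by_contra h
        push_neg at h
        exact hXnotvec ⟨hX.le, h⟩
      obtain ⟨Y₀, hY₀, hno⟩ := hex
      obtain ⟨W, hWmem, hWno, b, hb, hb0⟩ := exists_conformal_of_not_orth hno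
      have hWcov : W ∈ M.covectors := by
        rcases hWmem with rfl | rfl
        · exact hY₀
        · exact M.neg_mem _ hY₀
      have hbG : b ∈ M.ground := hX ▸ (hb0 : b ∈ supp X)
      -- delete b and use the induction hypothesis
      have hM' : (M.deleteOne b).ground.ncard ≤ k := by
        have h2 : (M.ground \ {b}).ncard < M.ground.ncard :=
          Set.ncard_diff_singleton_lt_of_mem hbG M.ground_finite
        have h3 : (M.deleteOne b).ground = M.ground \ {b} := rfl
        rw [h3]
        omega
      have hnovec' : ∀ V, (M.deleteOne b).IsVector V → V = 0 :=
        fun V hV => hnovec V (isVector_of_deleteOne hV)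
      have hXbar : supp (restrictAway {b} X) = (M.deleteOne b).ground := by
        ext e
        by_cases heb : e = b
        · subst heb
          constructor
          · intro h
            exact absurd (restrictAway_of_mem (Set.mem_singleton _)) h
          · rintro ⟨h1, h2⟩
            exact absurd rfl h2
        · rw [mem_supp, restrictAway_of_not_mem (by simpa using heb)]
          constructor
          · intro h
            exact ⟨hX ▸ (h : e ∈ supp X), by simpa using heb⟩
          · rintro ⟨h1, h2⟩
            rw [← hX] at h1
            exact h1
      obtain ⟨Yhat, hYhatcov, hres⟩ := ih (M.deleteOne b) hM' hnovec' _ hXbar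
      have hYhate : ∀ e, e ≠ b → Yhat e = X e := by
        intro e heb
        have := congrFun hres e
        rwa [restrictAway_of_not_mem (by simpa using heb),
          restrictAway_of_not_mem (by simpa using heb)] at this
      have hXb : X b ≠ 0 := show b ∈ supp X by rw [hX]; exact hbG
      by_cases hv1 : Yhat b = X b
      · have : X = Yhat := by
          funext e
          by_cases heb : e = b
          · subst heb; exact hv1.symm
          · exact (hYhate e heb).symm
        rw [this]
        exact hYhatcov
      by_cases hv0 : Yhat b = 0
      · obtain ⟨V, hVcov, hVb⟩ := exists_cov_ne_zero hnovec hbG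
        obtain ⟨V', hV'cov, hV'b⟩ := exists_cov_value hVcov hVb hXb
        exact compose_fix hX hYhatcov hv0 hYhate hV'cov hV'b
      · -- Yhat b = -(X b) : eliminate b between W and Yhat
        have hvneg : Yhat b = -(X b) := by
          rcases sign_eq_or_eq_neg hv0 hXb with h | h
          · exact absurd h hv1
          · exact h
        have hbsep : b ∈ sep W Yhat := by
          rw [mem_sep, hvneg, neg_neg, ← hb]
          exact ⟨rfl, hb ▸ hb0⟩
        obtain ⟨Z, hZcov, hZb, hZc⟩ := M.elim W hWcov Yhat hYhatcov b hbsep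
        have hsepsub : ∀ c, c ∈ sep W Yhat → c = b := by
          intro c hc
          by_contra hcb
          have hWc : W c ≠ 0 := hc.2
          have hcG : c ∈ M.ground := M.supp_subset W hWcov hWc
          have hXc : X c ≠ 0 := show c ∈ supp X by rw [hX]; exact hcG
          have h1 : W c = -(Yhat c) := hc.1
          rw [hYhate c hcb] at h1
          have : X c ≠ -(W c) := hWno c hXc
          rw [h1, neg_neg] at this
          exact this rfl
        have hZe : ∀ e, e ≠ b → Z e = X e := by
          intro e heb
          have he' : e ∉ sep W Yhat := fun hmem => heb (hsepsub e hmem)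
          rw [hZc e he']
          by_cases hWe : W e = 0
          · rw [compose_apply_of_eq hWe]
            exact hYhate e heb
          · rw [compose_apply_of_ne hWe]
            have heG : e ∈ M.ground := M.supp_subset W hWcov hWe
            have hXe : X e ≠ 0 := show e ∈ supp X by rw [hX]; exact heG
            exact (sign_eq_of_ne_neg hXe hWe (hWno e hXe)).symm
        obtain ⟨V, hVcov, hVb⟩ := exists_cov_ne_zero hnovec hbG
        obtain ⟨V', hV'cov, hV'b⟩ := exists_cov_value hVcov hVb hXb
        exact compose_fix hX hZcov hZb hZe hV'cov hV'b

theorem covectors_all_of_no_vector (M : OrientedMatroid α)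
    (hnovec : ∀ V, M.IsVector V → V = 0) :
    ∀ X : SignVec α, supp X ⊆ M.ground → X ∈ M.covectors := by
  classical
  suffices h : ∀ (k : ℕ) (X : SignVec α), supp X ⊆ M.ground →
      (M.ground \ supp X).ncard = k → X ∈ M.covectors by
    intro X hsub
    exact h _ X hsub rfl
  intro k
  induction k with
  | zero =>
    intro X hsub hcard
    have hfin : (M.ground \ supp X).Finite := M.ground_finite.subset diff_subset
    rw [Set.ncard_eq_zero hfin, Set.diff_eq_empty] at hcard
    exact full_support_covector_aux M.ground.ncard M le_rfl hnovec X
      (subset_antisymm hsub hcard)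
  | succ k ih =>
    intro X hsub hcard
    have hfin : (M.ground \ supp X).Finite := M.ground_finite.subset diff_subset
    have hne : (M.ground \ supp X).Nonempty := by
      rw [Set.nonempty_iff_ne_empty]
      intro h0
      rw [h0, Set.ncard_empty] at hcard
      omega
    obtain ⟨e, heG, heX⟩ := hne
    have hXe : X e = 0 := not_not.1 (fun h => heX h)
    have hsupp_update : ∀ s : SignType, s ≠ 0 →
        supp (Function.update X e s) = supp X ∪ {e} := by
      intro s hs
      ext c
      by_cases hce : c = e
      · subst hce
        constructor
        · intro _
          exact Or.inr rfl
        · intro _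
          show Function.update X c s c ≠ 0
          rw [Function.update_self]
          exact hs
      · simp only [mem_supp, Function.update_of_ne hce, Set.mem_union, Set.mem_singleton_iff,
          hce, or_false]
    have hmem : ∀ s : SignType, s ≠ 0 → Function.update X e s ∈ M.covectors := by
      intro s hs
      apply ih
      · rw [hsupp_update s hs]
        exact Set.union_subset hsub (by simpa using heG)
      · rw [hsupp_update s hs]
        have : M.ground \ (supp X ∪ {e}) = (M.ground \ supp X) \ {e} := by
          rw [Set.diff_diff]
        have hstep := Set.ncard_diff_singleton_of_mem
          (show e ∈ M.ground \ supp X from ⟨heG, heX⟩)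
        rw [this, hstep, hcard]
        omega
    have hX1 := hmem 1 (by decide)
    have hX2 := hmem (-1) (by decide)
    have hsep : e ∈ sep (Function.update X e 1) (Function.update X e (-1)) := by
      rw [mem_sep, Function.update_self, Function.update_self]
      exact ⟨by decide, by decide⟩
    obtain ⟨Z, hZcov, hZe, hZc⟩ := M.elim _ hX1 _ hX2 e hsep
    have hZX : Z = X := by
      funext c
      by_cases hce : c = e
      · subst hce
        rw [hZe, hXe]
      · have hc' : c ∉ sep (Function.update X e 1) (Function.update X e (-1)) := by
          intro hmem'
          rw [mem_sep, Function.update_of_ne hce, Function.update_of_ne hce] at hmem'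
          exact hmem'.2 (sign_eq_zero_of_self_eq_neg hmem'.1)
        rw [hZc c hc', compose_apply, Function.update_of_ne hce, Function.update_of_ne hce]
        split <;> rfl
    rw [← hZX]
    exact hZcov


/-! ### Rank and independence lemmas -/

lemma indep_subset {M : OrientedMatroid α} {A B : Set α} (h : M.Indep A) (hBA : B ⊆ A) :
    M.Indep B :=
  ⟨hBA.trans h.1, fun X hX hsub => h.2 X hX (hsub.trans hBA)⟩

lemma rk_eq_ncard_of_indep {M : OrientedMatroid α} {A : Set α} (hind : M.Indep A) :
    M.rk A = A.ncard := by
  apply IsGreatest.csSup_eq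
  constructor
  · exact ⟨A, subset_rfl, hind, rfl⟩
  · rintro k ⟨I, hIA, hI, rfl⟩
    exact Set.ncard_le_ncard hIA (M.ground_finite.subset hind.1)

lemma indep_of_no_circuit {M : OrientedMatroid α} (hnoc : ∀ X, ¬ M.IsCircuit X) {A : Set α}
    (hA : A ⊆ M.ground) : M.Indep A :=
  ⟨hA, fun X hX _ => hnoc X hX⟩

lemma indep_empty (M : OrientedMatroid α) : M.Indep ∅ := by
  refine ⟨Set.empty_subset _, fun X hX hsub => ?_⟩
  apply hX.2.1
  funext e
  by_contra h0
  exact hsub (h0 : e ∈ supp X)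

/-! ### Cube cell lemmas -/

lemma cubeCells_mem_iff {n : ℕ} {σ : Set ℕ} :
    σ ∈ cubeCells n ↔ σ ⊆ nset (2 * n) ∧
      ∀ i, i < n → ((i ∈ σ ∧ n + i ∉ σ) ∨ (i ∉ σ ∧ n + i ∈ σ)) := Iff.rfl

lemma ncard_nset (n : ℕ) : (nset n).ncard = n := by
  have : nset n = ↑(Finset.range n) := by
    ext x
    simp [nset]
  rw [this, Set.ncard_coe_finset, Finset.card_range]

lemma cubeCell_ncard {n : ℕ} {σ : Set ℕ} (hσ : σ ∈ cubeCells n) : σ.ncard = n := by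
  classical
  obtain ⟨hsub, hpair⟩ := hσ
  set c : ℕ → ℕ := fun i => if i ∈ σ then i else n + i with hc
  have himg : σ = c '' (nset n) := by
    ext x
    constructor
    · intro hx
      have hx2 : x < 2 * n := hsub hx
      by_cases hxn : x < n
      · exact ⟨x, hxn, by rw [hc]; simp [hx]⟩
      · refine ⟨x - n, show x - n < n by omega, ?_⟩
        have hxeq : n + (x - n) = x := by omega
        have : x - n ∉ σ := by
          rcases hpair (x - n) (by omega) with ⟨h1, h2⟩ | ⟨h1, h2⟩
          · rw [hxeq] at h2
            exact absurd hx h2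
          · exact h1
        rw [hc]
        simp only []
        rw [if_neg this]
        omega
    · rintro ⟨i, hi, rfl⟩
      rw [hc]
      by_cases hiσ : i ∈ σ
      · simpa [hiσ] using hiσ
      · rcases hpair i hi with ⟨h1, h2⟩ | ⟨h1, h2⟩
        · exact absurd h1 hiσ
        · simpa [hiσ] using h2
  have hinj : Set.InjOn c (nset n) := by
    intro i hi j hj hij
    have hi' : i < n := hi
    have hj' : j < n := hj
    rw [hc] at hij
    simp only at hij
    split_ifs at hij <;> omega
  rw [himg, Set.ncard_image_of_injOn hinj, ncard_nset]

lemma cubeCell_indep {N : OrientedMatroid ℕ} {n : ℕ} (hground : N.ground = nset (2 * n))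
    (hP : PropertyP N n) {σ : Set ℕ} (hσ : σ ∈ cubeCells n) : N.Indep σ := by
  refine ⟨by rw [hground]; exact hσ.1, fun X hX hsub => ?_⟩
  obtain ⟨i, hi, hii, hine⟩ := hP X hX
  have h1 : i ∈ σ := hsub hine
  have h2 : n + i ∈ σ := hsub (show X (n + i) ≠ 0 by rw [← hii]; exact hine)
  rcases hσ.2 i hi with ⟨_, hna⟩ | ⟨hna, _⟩
  · exact hna h2
  · exact hna h1

lemma sign_eq_one {s : SignType} (h0 : s ≠ 0) (hn : s ≠ -1) : s = 1 := by
  revert h0 hn; revert s; decide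

lemma sign_cases_ne {s : SignType} (h0 : s ≠ 0) : s = 1 ∨ s = -1 := by
  revert h0; revert s; decide

lemma sign_neg_eq_one {s : SignType} (h : -s = 1) : s = -1 := by
  revert h; revert s; decide

lemma sign_neg_eq_neg_one {s : SignType} (h : -s = -1) : s = 1 := by
  revert h; revert s; decide

lemma conv_inter {N Nf : OrientedMatroid ℕ} {n : ℕ} (hP : PropertyP N n)
    {f : ℕ} (hdel : IsDeletion Nf {f} N)
    {σ1 σ2 : Set ℕ} (h1 : σ1 ∈ cubeCells n) (h2 : σ2 ∈ cubeCells n)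
    (hc1 : MemConv Nf f σ1) (hc2 : MemConv Nf f σ2) : MemConv Nf f (σ1 ∩ σ2) := by
  obtain ⟨X1, hX1c, hX1p, hX1m⟩ := hc1
  obtain ⟨X2, hX2c, hX2p, hX2m⟩ := hc2
  have hX1f : X1 f = -1 := by
    have : f ∈ {e | X1 e = -1} := by rw [hX1m]; exact rfl
    exact this
  have hX2f : X2 f = -1 := by
    have : f ∈ {e | X2 e = -1} := by rw [hX2m]; exact rfl
    exact this
  have hX1neg : ∀ a, X1 a = -1 → a = f := by
    intro a ha
    have : a ∈ {e | X1 e = -1} := ha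
    rw [hX1m] at this
    exact this
  have hX2neg : ∀ a, X2 a = -1 → a = f := by
    intro a ha
    have : a ∈ {e | X2 e = -1} := ha
    rw [hX2m] at this
    exact this
  have heq : X1 = X2 := by
    by_contra hne12
    have hfsep : f ∈ sep X1 (-X2) := by
      rw [mem_sep, neg_apply, neg_neg, hX1f, hX2f]
      exact ⟨rfl, by decide⟩
    have hX2negv := OrientedMatroid.IsVector.neg hX2c.1
    obtain ⟨Z, hZv, hZf, hZc⟩ := vec_elim_aux Nf.ground.ncard Nf le_rfl X1 (-X2)
      hX1c.1 hX2negv f hfsep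
    have hSmem : ∀ a, a ∈ sep X1 (-X2) ↔ (X1 a = X2 a ∧ X1 a ≠ 0) := by
      intro a
      rw [mem_sep, neg_apply, neg_neg]
    have hZne : Z ≠ 0 := by
      have hex : ∃ a, X1 a ≠ 0 ∧ X1 a ≠ X2 a := by
        by_contra hall
        push_neg at hall
        have hsub : supp X1 ⊆ supp X2 := by
          intro a ha
          rw [mem_supp] at ha ⊢
          rw [← hall a ha]
          exact ha
        have hsupp_eq := hX2c.2.2 X1 hX1c.1 hX1c.2.1 hsub
        apply hne12
        funext a
        by_cases ha : X1 a = 0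
        · have h2' : X2 a = 0 := by
            by_contra h
            have hmem : a ∈ supp X2 := h
            rw [← hsupp_eq] at hmem
            exact hmem ha
          rw [ha, h2']
        · exact hall a ha
      obtain ⟨a, ha0, hane⟩ := hex
      have haS : a ∉ sep X1 (-X2) := fun h => hane ((hSmem a).1 h).1
      have hZa : Z a = X1 a := by rw [hZc a haS, compose_apply_of_ne ha0]
      intro h0
      rw [h0] at hZa
      exact ha0 hZa.symm
    obtain ⟨C, hCc, hCconf⟩ := exists_conformal_circuit Nf Z hZv hZne
    have hCf : C f = 0 := by
      by_contra h
      exact h ((hCconf f h).trans hZf)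
    have hCN : N.IsCircuit C := (hdel.2 C).2
      ⟨hCc, fun e he => by rw [Set.mem_singleton_iff] at he; rw [he]; exact hCf⟩
    obtain ⟨i, hi, hii, hine⟩ := hP C hCN
    have hZpos : ∀ a, Z a = 1 → a ∈ σ1 := by
      intro a ha
      have haf : a ≠ f := by
        rintro rfl
        rw [hZf] at ha
        exact absurd ha (by decide)
      by_cases haS : a ∈ sep X1 (-X2)
      · obtain ⟨he, h0⟩ := (hSmem a).1 haS
        exact hX1p (sign_eq_one h0 (fun h => haf (hX1neg a h)))
      · have hZa : Z a = compose X1 (-X2) a := hZc a haS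
        by_cases hX1a : X1 a = 0
        · rw [compose_apply_of_eq hX1a, neg_apply] at hZa
          have : X2 a = -1 := sign_neg_eq_one (hZa.symm.trans ha)
          exact absurd (hX2neg a this) haf
        · rw [compose_apply_of_ne hX1a] at hZa
          exact hX1p (hZa.symm.trans ha)
    have hZneg : ∀ a, Z a = -1 → a ∈ σ2 := by
      intro a ha
      have haf : a ≠ f := by
        rintro rfl
        rw [hZf] at ha
        exact absurd ha (by decide)
      by_cases haS : a ∈ sep X1 (-X2)
      · obtain ⟨he, h0⟩ := (hSmem a).1 haS
        have hX1a : X1 a = 1 := sign_eq_one h0 (fun h => haf (hX1neg a h))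
        exact hX2p (show X2 a = 1 by rw [← he]; exact hX1a)
      · have hZa : Z a = compose X1 (-X2) a := hZc a haS
        by_cases hX1a : X1 a = 0
        · rw [compose_apply_of_eq hX1a, neg_apply] at hZa
          exact hX2p (sign_neg_eq_neg_one (hZa.symm.trans ha))
        · rw [compose_apply_of_ne hX1a] at hZa
          exact absurd (hX1neg a (hZa.symm.trans ha)) haf
    have hZi : Z i = C i := (hCconf i hine).symm
    have hCni : C (n + i) ≠ 0 := by rw [← hii]; exact hine
    have hZni : Z (n + i) = C (n + i) := (hCconf (n + i) hCni).symm
    have hZine : Z i ≠ 0 := by rw [hZi]; exact hine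
    have hZii : Z i = Z (n + i) := by rw [hZi, hZni, hii]
    rcases sign_cases_ne hZine with h | h
    · have ha1 : i ∈ σ1 := hZpos i h
      have ha2 : n + i ∈ σ1 := hZpos (n + i) (by rw [← hZii]; exact h)
      rcases h1.2 i hi with ⟨_, hq⟩ | ⟨hq, _⟩
      · exact hq ha2
      · exact hq ha1
    · have ha1 : i ∈ σ2 := hZneg i h
      have ha2 : n + i ∈ σ2 := hZneg (n + i) (by rw [← hZii]; exact h)
      rcases h2.2 i hi with ⟨_, hq⟩ | ⟨hq, _⟩
      · exact hq ha2
      · exact hq ha1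
  refine ⟨X1, hX1c, fun a ha => ⟨hX1p ha, ?_⟩, hX1m⟩
  apply hX2p
  show X2 a = 1
  rw [← heq]
  exact ha

lemma deletion_cell_no_circuit {N Nσ : OrientedMatroid ℕ} {n : ℕ}
    (hP : PropertyP N n) {σ : Set ℕ}
    (hσ : σ ∈ cubeCells n) (hdel : IsDeletion N (N.ground \ σ) Nσ) :
    ∀ X, ¬ Nσ.IsCircuit X := by
  intro X hX
  rw [hdel.2] at hX
  obtain ⟨hXN, hvan⟩ := hX
  obtain ⟨i, hi, hii, hine⟩ := hP X hXN
  have hsupp := hXN.1.1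
  have hmem : ∀ a, X a ≠ 0 → a ∈ σ := by
    intro a ha
    by_contra haσ
    exact ha (hvan a ⟨hsupp ha, haσ⟩)
  have h1 : i ∈ σ := hmem i hine
  have h2 : n + i ∈ σ := hmem (n + i) (by rw [← hii]; exact hine)
  rcases hσ.2 i hi with ⟨_, hq⟩ | ⟨hq, _⟩
  · exact hq h2
  · exact hq h1

lemma no_vector_of_no_circuit {M : OrientedMatroid ℕ} (hnoc : ∀ X, ¬ M.IsCircuit X) :
    ∀ V, M.IsVector V → V = 0 := by
  intro V hV
  by_contra hne
  obtain ⟨C, hC, _⟩ := exists_conformal_circuit M V hV hne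
  exact hnoc C hC

theorem cube_subdivision_of_propertyP' (N : OrientedMatroid ℕ) (n : ℕ)
    (hground : N.ground = nset (2 * n))
    (hrank : N.rank = n)
    (hP : PropertyP N n) :
    IsSubdivision N (cubeCells n) := by
  classical
  have hcells_sub : ∀ σ ∈ cubeCells n, σ ⊆ N.ground := fun σ hσ => by
    rw [hground]; exact hσ.1
  refine ⟨?_, ?_, ?_, ?_⟩
  · -- (1) full rank cells
    intro σ hσ
    refine ⟨hcells_sub σ hσ, ?_⟩
    rw [rk_eq_ncard_of_indep (cubeCell_indep hground hP hσ), cubeCell_ncard hσ, hrank]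
  · -- (2) convexity condition
    intro f hf Nf hext σ1 h1 σ2 h2 hc1 hc2
    exact conv_inter hP hext.2.2.2 h1 h2 hc1 hc2
  · -- (3) intersections are faces
    intro σ1 h1 σ2 h2 N1 hdel
    have hg1 : N1.ground = σ1 := by
      rw [hdel.1, Set.diff_diff_cancel_left (hcells_sub σ1 h1)]
    have hnoc := deletion_cell_no_circuit hP h1 hdel
    have hnovec := no_vector_of_no_circuit hnoc
    set χ : SignVec ℕ := fun e => if e ∈ σ1 \ σ2 then 1 else 0 with hχ
    have hχsupp : supp χ = σ1 \ σ2 := by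
      ext e
      rw [mem_supp, hχ]
      by_cases he : e ∈ σ1 \ σ2 <;> simp [he]
    have hχcov : χ ∈ N1.covectors := by
      apply covectors_all_of_no_vector N1 hnovec χ
      rw [hχsupp, hg1]
      exact diff_subset
    refine ⟨χ, hχcov, fun e => ?_, ?_⟩
    · rw [hχ]
      by_cases he : e ∈ σ1 \ σ2 <;> simp [he]
    · rw [hg1, hχsupp, Set.diff_diff_right_self]
  · -- (4) facets of cells
    intro σ hσ Nσ hdel F hF
    have hgσ : Nσ.ground = σ := by
      rw [hdel.1, Set.diff_diff_cancel_left (hcells_sub σ hσ)]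
    have hnoc := deletion_cell_no_circuit hP hσ hdel
    have hrkA : ∀ A, A ⊆ σ → Nσ.rk A = A.ncard := fun A hA =>
      rk_eq_ncard_of_indep (indep_of_no_circuit hnoc (by rw [hgσ]; exact hA))
    have hrankσ : Nσ.rank = n := by
      rw [OrientedMatroid.rank, hgσ, hrkA σ subset_rfl, cubeCell_ncard hσ]
    obtain ⟨⟨Y, hY, hYnn, hFeq⟩, hFrk⟩ := hF
    have hFsub : F ⊆ σ := by rw [hFeq, hgσ]; exact diff_subset
    have hFcard : F.ncard = n - 1 := by rw [← hrkA F hFsub, hFrk, hrankσ]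
    by_cases hn : n = 0
    · subst hn
      left
      refine ⟨∅, ⟨⟨0, N.zero_mem, fun e => Or.inr rfl, ?_⟩, ?_⟩, ?_⟩
      · have h0 : supp (0 : SignVec ℕ) = ∅ := by
          ext e
          simp [supp]
        rw [h0, Set.diff_empty, hground]
        ext x
        simp [nset]
      · rw [rk_eq_ncard_of_indep (indep_empty N), Set.ncard_empty, hrank]
      · have hσ0 : σ = ∅ := by
          have hh := hσ.1
          rw [show nset (2 * 0) = (∅ : Set ℕ) by ext x; simp [nset]] at hh
          exact Set.subset_empty_iff.1 hh
        rw [hσ0] at hFsub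
        exact hFsub
    · right
      have hσfin : σ.Finite := N.ground_finite.subset (hcells_sub σ hσ)
      have hσcard : σ.ncard = n := cubeCell_ncard hσ
      have hdiffcard : (σ \ F).ncard = 1 := by
        rw [Set.ncard_diff hFsub (hσfin.subset hFsub), hσcard, hFcard]
        omega
      obtain ⟨e, he⟩ := Set.ncard_eq_one.1 hdiffcard
      have heσF : e ∈ σ \ F := by rw [he]; exact rfl
      have heσ : e ∈ σ := heσF.1
      have heF : e ∉ F := heσF.2
      have hFeq2 : F = σ \ {e} := by
        rw [← Set.diff_diff_cancel_left hFsub, he]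
      have he2n : e < 2 * n := hσ.1 heσ
      set p := if e < n then n + e else e - n with hp
      set i := if e < n then e else e - n with hi
      have hin : i < n := by rw [hi]; split <;> omega
      have hpair_ep : (e = i ∧ p = n + i) ∨ (p = i ∧ e = n + i) := by
        rw [hp, hi]
        split
        · left; omega
        · right; omega
      have hep : e ≠ p := by rw [hp]; split <;> omega
      have hpσ : p ∉ σ := by
        rcases hpair_ep with ⟨h1, h2⟩ | ⟨h1, h2⟩
        · rcases hσ.2 i hin with ⟨ha, hb⟩ | ⟨ha, hb⟩
          · rw [h2]; exact hb
          · exact absurd (h1 ▸ heσ) ha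
        · rcases hσ.2 i hin with ⟨ha, hb⟩ | ⟨ha, hb⟩
          · exact absurd (h2 ▸ heσ) hb
          · rw [h1]; exact ha
      -- σ = insert e F
      have hσeq : σ = insert e F := by
        rw [hFeq2, Set.insert_diff_singleton, Set.insert_eq_self.2 heσ]
      set σ' := insert p F with hσ'def
      have hpσ' : p ∈ σ' := Set.mem_insert _ _
      have heσ' : e ∉ σ' := by
        rw [hσ'def]
        rintro (h | h)
        · exact hep h
        · exact heF h
      have hp2n : p < 2 * n := by
        rcases hpair_ep with ⟨_, h2⟩ | ⟨h2, _⟩ <;> omega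
      -- pair disjointness helper
      have hdisj : ∀ j, j < n → j ≠ i → j ≠ e ∧ j ≠ p ∧ n + j ≠ e ∧ n + j ≠ p := by
        intro j hj hji
        rcases hpair_ep with ⟨h1, h2⟩ | ⟨h1, h2⟩ <;>
          exact ⟨by omega, by omega, by omega, by omega⟩
      -- σ' is a cube cell
      have hσ'cell : σ' ∈ cubeCells n := by
        constructor
        · rw [hσ'def]
          rintro x (rfl | hx)
          · exact hp2n
          · exact hσ.1 (hFsub hx)
        · intro j hj
          by_cases hji : j = i
          · subst hji
            rcases hpair_ep with ⟨h1, h2⟩ | ⟨h1, h2⟩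
            · right
              constructor
              · rw [← h1]; exact heσ'
              · rw [← h2]; exact hpσ'
            · left
              constructor
              · rw [← h1]; exact hpσ'
              · rw [← h2]; exact heσ'
          · obtain ⟨hje, hjp, hnje, hnjp⟩ := hdisj j hj hji
            have hmemj : j ∈ σ' ↔ j ∈ σ := by
              rw [hσ'def, Set.mem_insert_iff, hFeq2]
              constructor
              · rintro (h | h)
                · exact absurd h hjp
                · exact h.1
              · intro h
                exact Or.inr ⟨h, by simpa using hje⟩
            have hmemnj : n + j ∈ σ' ↔ n + j ∈ σ := by
              rw [hσ'def, Set.mem_insert_iff, hFeq2]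
              constructor
              · rintro (h | h)
                · exact absurd h hnjp
                · exact h.1
              · intro h
                exact Or.inr ⟨h, by simpa using hnje⟩
            rcases hσ.2 j hj with ⟨ha, hb⟩ | ⟨ha, hb⟩
            · left; exact ⟨hmemj.2 ha, fun h => hb (hmemnj.1 h)⟩
            · right; exact ⟨fun h => ha (hmemj.1 h), hmemnj.2 hb⟩
      have hσne : σ ≠ σ' := by
        intro h
        exact heσ' (h ▸ heσ)
      -- every cell containing F is σ or σ'
      have hτ_sub : ∀ τ, τ ∈ cubeCells n → F ⊆ τ → ∀ x ∈ τ, x ∈ F ∨ x = e ∨ x = p := by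
        intro τ hτ hFτ x hx
        have hx2n : x < 2 * n := hτ.1 hx
        by_cases hxep : x = e ∨ x = p
        · right; exact hxep
        · left
          push_neg at hxep
          obtain ⟨hxe, hxp⟩ := hxep
          obtain ⟨j, hjn, hxj⟩ : ∃ j, j < n ∧ (x = j ∨ x = n + j) := by
            by_cases h : x < n
            · exact ⟨x, h, Or.inl rfl⟩
            · exact ⟨x - n, by omega, Or.inr (by omega)⟩
          have hji : j ≠ i := by
            intro h
            subst h
            rcases hpair_ep with ⟨h1, h2⟩ | ⟨h1, h2⟩ <;> rcases hxj with rfl | rfl <;> omega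
          obtain ⟨hje, hjp, hnje, hnjp⟩ := hdisj j hjn hji
          rcases hσ.2 j hjn with ⟨hc1, hc2⟩ | ⟨hc1, hc2⟩
          · -- j ∈ σ
            have hjF : j ∈ F := by
              rw [hFeq2]
              exact ⟨hc1, by simpa using hje⟩
            have hjτ : j ∈ τ := hFτ hjF
            rcases hxj with rfl | rfl
            · exact hjF
            · rcases hτ.2 j hjn with ⟨_, hq⟩ | ⟨hq, _⟩
              · exact absurd hx hq
              · exact absurd hjτ hq
          · -- n + j ∈ σ
            have hjF : n + j ∈ F := by
              rw [hFeq2]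
              exact ⟨hc2, by simpa using hnje⟩
            have hjτ : n + j ∈ τ := hFτ hjF
            rcases hxj with rfl | rfl
            · rcases hτ.2 x hjn with ⟨_, hq⟩ | ⟨hq, _⟩
              · exact absurd hjτ hq
              · exact absurd hx hq
            · exact hjF
      have hτ_eq : ∀ τ, τ ∈ cubeCells n → F ⊆ τ → τ = σ ∨ τ = σ' := by
        intro τ hτ hFτ
        have hone : (e ∈ τ ∧ p ∉ τ) ∨ (p ∈ τ ∧ e ∉ τ) := by
          rcases hpair_ep with ⟨h1, h2⟩ | ⟨h1, h2⟩
          · rcases hτ.2 i hin with ⟨ha, hb⟩ | ⟨ha, hb⟩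
            · left; rw [h1, h2]; exact ⟨ha, hb⟩
            · right; rw [h1, h2]; exact ⟨hb, ha⟩
          · rcases hτ.2 i hin with ⟨ha, hb⟩ | ⟨ha, hb⟩
            · right; rw [h1, h2]; exact ⟨ha, hb⟩
            · left; rw [h1, h2]; exact ⟨hb, ha⟩
        rcases hone with ⟨he1, hp1⟩ | ⟨hp1, he1⟩
        · left
          apply subset_antisymm
          · intro x hx
            rcases hτ_sub τ hτ hFτ x hx with h | h | h
            · exact hFsub h
            · rw [h]; exact heσ
            · exact absurd (h ▸ hx) hp1
          · rw [hσeq]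
            exact Set.insert_subset he1 hFτ
        · right
          apply subset_antisymm
          · intro x hx
            rcases hτ_sub τ hτ hFτ x hx with h | h | h
            · exact Set.mem_insert_of_mem _ h
            · exact absurd (h ▸ hx) he1
            · rw [h]; exact Set.mem_insert _ _
          · rw [hσ'def]
            exact Set.insert_subset hp1 hFτ
      have hFσ' : F ⊆ σ' := Set.subset_insert _ _
      have hset : {τ ∈ cubeCells n | F ⊆ τ} = {σ, σ'} := by
        ext τ
        simp only [Set.mem_setOf_eq, Set.mem_insert_iff, Set.mem_singleton_iff]
        constructor
        · rintro ⟨hτ, hFτ⟩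
          exact hτ_eq τ hτ hFτ
        · rintro (rfl | rfl)
          · exact ⟨hσ, hFsub⟩
          · exact ⟨hσ'cell, hFσ'⟩
      rw [hset, Set.ncard_pair hσne]

end AuxOMHK

/-- Let `N` be an oriented matroid of rank `n` on `[2n]`
satisfying property (P).  Then
`S = {B ⊆ [2n] : |B ∩ {i, n+i}| = 1 for every i < n}` is a subdivision of
`N`. -/
theorem cube_subdivision_of_propertyP (N : OrientedMatroid ℕ) (n : ℕ)
    (hground : N.ground = nset (2 * n))
    (hrank : N.rank = n)
    (hP : PropertyP N n) :
    IsSubdivision N (cubeCells n) :=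
  cube_subdivision_of_propertyP' N n hground hrank hP

end OMHK
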